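/- Let f, g ∈ PSL(2,ℂ) be loxodromic with f² = g². Then either f = g, or there exists r ∈ PSL(2,ℂ) with r ≠ 1, r² = 1, f = g·r, and r fixes both fixed points of g in ℙ¹(ℂ) (i.e. r is an elliptic involution with the same axis as f and g; in particular f and g have the same fixed points). -/

import Mathlib

/- Common setup: PSL(2,ℂ), its action on ℙ¹(ℂ), loxodromic/parabolic/elliptic elements,
elementary subgroups, surface groups, the pentagon group Γ and the embedding ι. -/

noncomputable section

open Matrix

/-- `SL(2,ℂ)`. -/
abbrev SL2C : Type := Matrix.SpecialLinearGroup (Fin 2) ℂ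

instance : TopologicalSpace SL2C := instTopologicalSpaceSubtype

/-- `PSL(2,ℂ)`, the quotient of `SL(2,ℂ)` by its center `{±I}`. -/
abbrev PSL2C : Type := SL2C ⧸ Subgroup.center SL2C

/-- The quotient map `SL(2,ℂ) → PSL(2,ℂ)`. -/
def projPSL : SL2C →* PSL2C := QuotientGroup.mk' (Subgroup.center SL2C)

/-- The complex projective line `ℙ¹(ℂ)`. -/
abbrev P1 : Type := Projectivization ℂ (Fin 2 → ℂ)

/-- The square of the trace, well defined on `PSL(2,ℂ)`. -/
def trSq (g : PSL2C) : ℂ :=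
  (Matrix.trace ((Quotient.out g : SL2C) : Matrix (Fin 2) (Fin 2) ℂ)) ^ 2

/-- `g` is loxodromic iff `tr² g` is not a real number in `[0,4]`. -/
def IsLoxodromic (g : PSL2C) : Prop := ¬ ∃ r : ℝ, 0 ≤ r ∧ r ≤ 4 ∧ trSq g = (r : ℂ)

/-- `g` is parabolic iff `g ≠ 1` and `tr² g = 4`. -/
def IsParabolic (g : PSL2C) : Prop := g ≠ 1 ∧ trSq g = 4

/-- `g` is elliptic iff `g ≠ 1` and `tr² g` is a real number in `[0,4)`. -/
def IsElliptic (g : PSL2C) : Prop := g ≠ 1 ∧ ∃ r : ℝ, 0 ≤ r ∧ r < 4 ∧ trSq g = (r : ℂ)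

lemma sl2_toLin'_injective (g : SL2C) :
    Function.Injective (Matrix.toLin' (g : Matrix (Fin 2) (Fin 2) ℂ)) := by
  intro v w h
  have h2 : Matrix.toLin' ((g⁻¹ : SL2C) : Matrix (Fin 2) (Fin 2) ℂ)
      (Matrix.toLin' ((g : SL2C) : Matrix (Fin 2) (Fin 2) ℂ) v) =
      Matrix.toLin' ((g⁻¹ : SL2C) : Matrix (Fin 2) (Fin 2) ℂ)
      (Matrix.toLin' ((g : SL2C) : Matrix (Fin 2) (Fin 2) ℂ) w) := by rw [h]
  rwa [← Matrix.toLin'_mul_apply, ← Matrix.toLin'_mul_apply,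
    ← Matrix.SpecialLinearGroup.coe_mul, inv_mul_cancel,
    Matrix.SpecialLinearGroup.coe_one, Matrix.toLin'_one, LinearMap.id_apply,
    LinearMap.id_apply] at h2

/-- The action of `PSL(2,ℂ)` on `ℙ¹(ℂ)` by Möbius transformations (independent of the
choice of representative, since the center acts trivially on lines). -/
def pslAct (g : PSL2C) (x : P1) : P1 :=
  Projectivization.map (Matrix.toLin' ((Quotient.out g : SL2C) : Matrix (Fin 2) (Fin 2) ℂ))
    (sl2_toLin'_injective _) x

/-- A subgroup of `PSL(2,ℂ)` is elementary if it has a nonempty invariant subset of `ℙ¹(ℂ)`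
with at most two elements, or its closure is compact. -/
def IsElementarySubgroup (G : Subgroup PSL2C) : Prop :=
  (∃ S : Set P1, S.Nonempty ∧ S.Finite ∧ S.ncard ≤ 2 ∧ ∀ g ∈ G, pslAct g '' S = S) ∨
    IsCompact (closure (G : Set PSL2C))

/-- A homomorphism to `PSL(2,ℂ)` is non-elementary if its image is non-elementary. -/
def IsNonElem {H : Type*} [Group H] (ρ : H →* PSL2C) : Prop :=
  ¬ IsElementarySubgroup ρ.range

/-- `g` sends a fixed point of `h` to the other one. -/
def SendsFixedToOther (g h : PSL2C) : Prop :=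
  ∃ p q : P1, p ≠ q ∧ pslAct h p = p ∧ pslAct h q = q ∧ (pslAct g p = q ∨ pslAct g q = p)

/-- `g` interchanges the two fixed points of `h`. -/
def InterchangesFixed (g h : PSL2C) : Prop :=
  ∃ p q : P1, p ≠ q ∧ pslAct h p = p ∧ pslAct h q = q ∧ pslAct g p = q ∧ pslAct g q = p

/-- `PSL(2,ℝ)` as a subgroup of `PSL(2,ℂ)`: the image of `SL(2,ℝ)`. -/
def PSL2R : Subgroup PSL2C :=
  (projPSL.comp (Matrix.SpecialLinearGroup.map (n := Fin 2) Complex.ofRealHom)).range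

/-- `γ₁, γ₂` generate a rank-two Schottky group: the induced map from the free group `F₂` is
injective, with discrete image, all of whose nontrivial elements are loxodromic. -/
def GeneratesSchottky (γ₁ γ₂ : PSL2C) : Prop :=
  Function.Injective (FreeGroup.lift ![γ₁, γ₂] : FreeGroup (Fin 2) →* PSL2C) ∧
    DiscreteTopology ((FreeGroup.lift ![γ₁, γ₂] : FreeGroup (Fin 2) →* PSL2C).range) ∧
    ∀ g ∈ (FreeGroup.lift ![γ₁, γ₂] : FreeGroup (Fin 2) →* PSL2C).range, g ≠ 1 → IsLoxodromic g

/-- The commutator `[x,y] = y⁻¹x⁻¹yx` in a free group. -/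
def commF {α : Type*} (x y : FreeGroup α) : FreeGroup α := y⁻¹ * x⁻¹ * y * x

/-- The surface relator `[a_g,b_g]⋯[a₁,b₁]`. -/
def surfaceRel (g : ℕ) : FreeGroup (Fin g × Bool) :=
  (((List.finRange g).reverse).map
    (fun i => commF (FreeGroup.of (i, false)) (FreeGroup.of (i, true)))).prod

/-- The genus-`g` surface group `Γ_g`. -/
abbrev SurfaceGroup (g : ℕ) : Type :=
  PresentedGroup ({surfaceRel g} : Set (FreeGroup (Fin g × Bool)))

/-- The generator `a_{i+1}` of `Γ_g`. -/
def sgA (g : ℕ) (i : Fin g) : SurfaceGroup g := PresentedGroup.of (i, false)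

/-- The generator `b_{i+1}` of `Γ_g`. -/
def sgB (g : ℕ) (i : Fin g) : SurfaceGroup g := PresentedGroup.of (i, true)

/-- The genus-2 surface group `Γ₂`. -/
abbrev Gamma2 : Type := SurfaceGroup 2
def a1 : Gamma2 := sgA 2 0
def b1 : Gamma2 := sgB 2 0
def a2 : Gamma2 := sgA 2 1
def b2 : Gamma2 := sgB 2 1

/-- Relations for the group `Γ = ⟨q₁,…,q₆ ∣ qᵢ² = 1, q₁q₂q₃q₄q₅q₆ = 1⟩`. -/
def pentagonRels : Set (FreeGroup (Fin 6)) :=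
  (Set.range fun i : Fin 6 => FreeGroup.of i * FreeGroup.of i) ∪
    {((List.finRange 6).map FreeGroup.of).prod}

/-- The group `Γ = ⟨q₁,…,q₆ ∣ qᵢ² = 1, q₁q₂q₃q₄q₅q₆ = 1⟩`. -/
abbrev GammaP : Type := PresentedGroup pentagonRels

/-- The generator `q_{i+1}` of `Γ`. -/
def qgen (i : Fin 6) : GammaP := PresentedGroup.of i

lemma qgen_mul_self (i : Fin 6) : qgen i * qgen i = 1 := by
  have hmem : FreeGroup.of i * FreeGroup.of i ∈ pentagonRels :=
    Set.mem_union_left _ ⟨i, rfl⟩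
  have h : (PresentedGroup.mk pentagonRels (FreeGroup.of i * FreeGroup.of i)) = 1 :=
    (QuotientGroup.eq_one_iff _).mpr (Subgroup.subset_normalClosure hmem)
  rw [_root_.map_mul] at h
  exact h

lemma qgen_prod : qgen 0 * (qgen 1 * (qgen 2 * (qgen 3 * (qgen 4 * qgen 5)))) = 1 := by
  have hmem : ((List.finRange 6).map FreeGroup.of).prod ∈ pentagonRels :=
    Set.mem_union_right _ rfl
  have h : (PresentedGroup.mk pentagonRels (((List.finRange 6).map FreeGroup.of).prod)) = 1 :=
    (QuotientGroup.eq_one_iff _).mpr (Subgroup.subset_normalClosure hmem)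
  have h6 : List.finRange 6 = [0, 1, 2, 3, 4, 5] := by decide
  rw [h6] at h
  simp [mul_assoc] at h
  exact h

lemma pent_helper {G : Type*} [Group G] (x : Fin 6 → G) (hx : ∀ i, x i * x i = 1)
    (hp : x 0 * (x 1 * (x 2 * (x 3 * (x 4 * x 5)))) = 1) :
    (x 4 * x 5)⁻¹ * (x 4 * x 3)⁻¹ * (x 4 * x 5) * (x 4 * x 3) *
      ((x 1 * x 2)⁻¹ * (x 1 * x 0)⁻¹ * (x 1 * x 2) * (x 1 * x 0)) = 1 := by
  have hinv : ∀ i, (x i)⁻¹ = x i := fun i => inv_eq_of_mul_eq_one_right (hx i)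
  have hrev : x 5 * (x 4 * (x 3 * (x 2 * (x 1 * x 0)))) = 1 := by
    have h := congrArg (·⁻¹) hp
    simpa [_root_.mul_inv_rev, hinv, mul_assoc] using h
  have key : ∀ (i : Fin 6) (t : G), x i * (x i * t) = t := fun i t => by
    rw [← mul_assoc, hx, one_mul]
  have key2 : ∀ t : G, x 5 * (x 4 * (x 3 * (x 2 * (x 1 * (x 0 * t))))) = t := fun t => by
    calc x 5 * (x 4 * (x 3 * (x 2 * (x 1 * (x 0 * t)))))
        = (x 5 * (x 4 * (x 3 * (x 2 * (x 1 * x 0))))) * t := by simp [mul_assoc]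
      _ = t := by rw [hrev, one_mul]
  simp only [_root_.mul_inv_rev, hinv, mul_assoc]
  simp only [key, key2]
  exact hrev

/-- The images of the generators `a₁, b₁, a₂, b₂` under `ι`. -/
def pentMap : Fin 2 × Bool → GammaP
  | (0, false) => qgen 1 * qgen 0
  | (0, true) => qgen 1 * qgen 2
  | (1, false) => qgen 4 * qgen 3
  | (1, true) => qgen 4 * qgen 5

lemma surfaceRel_two :
    surfaceRel 2 = commF (FreeGroup.of ((1 : Fin 2), false)) (FreeGroup.of ((1 : Fin 2), true)) *
      commF (FreeGroup.of ((0 : Fin 2), false)) (FreeGroup.of ((0 : Fin 2), true)) := by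
  have h : List.finRange 2 = [0, 1] := by decide
  simp [surfaceRel, h]

/-- The embedding `ι : Γ₂ → Γ`, `a₁ ↦ q₂q₁`, `b₁ ↦ q₂q₃`, `a₂ ↦ q₅q₄`, `b₂ ↦ q₅q₆`. -/
def iota : Gamma2 →* GammaP :=
  PresentedGroup.toGroup (f := pentMap) (by
    intro r hr
    rw [Set.mem_singleton_iff] at hr
    subst hr
    rw [surfaceRel_two]
    simp only [commF, _root_.map_mul, _root_.map_inv, FreeGroup.lift_apply_of]
    have h01 : pentMap ((0 : Fin 2), false) = qgen 1 * qgen 0 := rfl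
    have h02 : pentMap ((0 : Fin 2), true) = qgen 1 * qgen 2 := rfl
    have h11 : pentMap ((1 : Fin 2), false) = qgen 4 * qgen 3 := rfl
    have h12 : pentMap ((1 : Fin 2), true) = qgen 4 * qgen 5 := rfl
    rw [h01, h02, h11, h12]
    exact pent_helper (fun i => qgen i) qgen_mul_self qgen_prod)

/-- A pentagon representation: a non-elementary `ρ : Γ₂ → PSL(2,ℂ)` extending to `Γ` with
exactly one `qᵢ` killed. -/
def IsPentagonRep (ρ : Gamma2 →* PSL2C) : Prop :=
  IsNonElem ρ ∧ ∃ ρ' : GammaP →* PSL2C, ρ'.comp iota = ρ ∧ ∃! i : Fin 6, ρ' (qgen i) = 1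

/-- A primitive element of the free group `F₂`: part of a free basis. -/
def IsPrimitiveF2 (γ : FreeGroup (Fin 2)) : Prop :=
  ∃ φ : MulAut (FreeGroup (Fin 2)), φ (FreeGroup.of 0) = γ

/-- `pp` and `pm` are the attracting resp. repelling fixed points of `α`: for a representative
`A ∈ SL(2,ℂ)` with eigenvalues `l, l⁻¹`, `|l| > 1`, they are the corresponding eigenlines. -/
def IsAttrRep (α : PSL2C) (pp pm : P1) : Prop :=
  ∃ A : SL2C, projPSL A = α ∧ ∃ l : ℂ, 1 < ‖l‖ ∧
    ∃ (v w : Fin 2 → ℂ) (hv : v ≠ 0) (hw : w ≠ 0),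
      (A : Matrix (Fin 2) (Fin 2) ℂ) *ᵥ v = l • v ∧
      (A : Matrix (Fin 2) (Fin 2) ℂ) *ᵥ w = l⁻¹ • w ∧
      pp = Projectivization.mk ℂ v hv ∧ pm = Projectivization.mk ℂ w hw

/-! Lift `f, g` to `F, G ∈ SL(2,ℂ)`, so that `F² = ±G²`. By Cayley–Hamilton
`G² = tr(G) G - 1`, and `tr G ≠ 0` since `g` is loxodromic, so `F` commutes with `G`.
Hence `R = G⁻¹F` commutes with `G` and `R² = ±1`. If `R² = 1`, Cayley–Hamilton for `R`
forces `R = ±1`, i.e. `f = g`. If `R² = -1`, then `R ≠ ±1` and `r = [R]` is an involution;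
as `R` commutes with the non-scalar `G`, it preserves the eigenlines of `G`, which are the
fixed points of `g`. -/

namespace Matrix

theorem mul_self_eq_trace_smul_sub_det_smul {R : Type*} [CommRing R]
    (A : Matrix (Fin 2) (Fin 2) R) : A * A = A.trace • A - A.det • 1 := by
  ext i j
  fin_cases i <;> fin_cases j <;>
    simp [mul_apply, trace_fin_two, det_fin_two] <;> ring

variable {K : Type*} [Field K]

theorem commute_of_commute_mul_self {A X : Matrix (Fin 2) (Fin 2) K} (ht : A.trace ≠ 0)
    (h : Commute X (A * A)) : Commute X A := by
  rw [mul_self_eq_trace_smul_sub_det_smul] at h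
  have htA : Commute X (A.trace • A) := by
    simpa using h.add_right ((Commute.one_right X).smul_right A.det)
  simpa [smul_smul, inv_mul_cancel₀ ht] using htA.smul_right A.trace⁻¹

/-- The eigenspace of a non-scalar `2 × 2` matrix is a line, and a commuting matrix preserves
it. -/
theorem exists_smul_eq_mulVec_of_commute {A X : Matrix (Fin 2) (Fin 2) K}
    (hA : ∀ c : K, A ≠ c • 1) (hXA : Commute X A) {u : Fin 2 → K} {c : K}
    (hu : u ≠ 0) (hAu : A *ᵥ u = c • u) : ∃ k : K, k • u = X *ᵥ u := by
  set N := toLin' (A - c • 1)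
  have hu_ker : u ∈ LinearMap.ker N := by
    rw [LinearMap.mem_ker, toLin'_apply, sub_mulVec, smul_mulVec, one_mulVec, hAu, sub_self]
  have hXu_ker : X *ᵥ u ∈ LinearMap.ker N := by
    rw [LinearMap.mem_ker, toLin'_apply, sub_mulVec, smul_mulVec, one_mulVec, mulVec_mulVec,
      ← hXA.eq, ← mulVec_mulVec, hAu, mulVec_smul, sub_self]
  have hu' : (⟨u, hu_ker⟩ : LinearMap.ker N) ≠ 0 := by simpa using hu
  have hrange : 1 ≤ Module.finrank K (LinearMap.range N) := by
    rw [Nat.one_le_iff_ne_zero, Ne, Submodule.finrank_eq_zero, LinearMap.range_eq_bot,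
      LinearEquiv.map_eq_zero_iff, sub_eq_zero]
    exact hA c
  have hker : Module.finrank K (LinearMap.ker N) = 1 := by
    have hdim := N.finrank_range_add_finrank_ker
    have hpos : 0 < Module.finrank K (LinearMap.ker N) :=
      Module.finrank_pos_iff_exists_ne_zero.mpr ⟨_, hu'⟩
    rw [Module.finrank_fin_fun] at hdim
    omega
  obtain ⟨k, hk⟩ := exists_smul_eq_of_finrank_eq_one hker hu' ⟨X *ᵥ u, hXu_ker⟩
  exact ⟨k, congrArg Subtype.val hk⟩

namespace SpecialLinearGroup

open Subgroup

theorem commute_of_mul_self_mul_eq_mul_self {F G z : SpecialLinearGroup (Fin 2) K}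
    (ht : (G : Matrix (Fin 2) (Fin 2) K).trace ≠ 0)
    (hz : z ∈ center (SpecialLinearGroup (Fin 2) K)) (h : G * G * z = F * F) : Commute F G := by
  have hFGG : Commute F (G * G) := by
    rw [eq_mul_inv_of_mul_eq h]
    exact ((Commute.refl F).mul_right (Commute.refl F)).mul_right
      (Subgroup.mem_center_iff.mp (inv_mem hz) F)
  exact Subtype.ext (commute_of_commute_mul_self ht (congrArg Subtype.val hFGG.eq)).eq

theorem trace_sq_eq_four_of_eq_smul_one {A : SpecialLinearGroup (Fin 2) K} {c : K}
    (h : (A : Matrix (Fin 2) (Fin 2) K) = c • 1) :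
    (A : Matrix (Fin 2) (Fin 2) K).trace ^ 2 = 4 := by
  have hdet := A.det_coe
  rw [h, det_smul, det_one, Fintype.card_fin, mul_one] at hdet
  rw [h, trace_smul, trace_one, Fintype.card_fin, smul_eq_mul]
  linear_combination 4 * hdet

theorem mem_center_iff_eq_one_or_eq_neg_one {A : SpecialLinearGroup (Fin 2) K} :
    A ∈ center (SpecialLinearGroup (Fin 2) K) ↔ A = 1 ∨ A = -1 := by
  rw [mem_center_iff, Fintype.card_fin]
  constructor
  · rintro ⟨s, hs, hA⟩
    rcases mul_self_eq_one_iff.mp (by rwa [sq] at hs) with rfl | rfl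
    · exact Or.inl (Subtype.ext (by rw [← hA, map_one, coe_one]))
    · exact Or.inr (Subtype.ext (by rw [← hA, map_neg, map_one, coe_neg, coe_one]))
  · rintro (rfl | rfl)
    · exact ⟨1, one_pow 2, by rw [map_one, coe_one]⟩
    · exact ⟨-1, by norm_num, by rw [map_neg, map_one, coe_neg, coe_one]⟩

variable [NeZero (2 : K)]

theorem mem_center_of_mul_self_eq_one {A : SpecialLinearGroup (Fin 2) K} (h : A * A = 1) :
    A ∈ center (SpecialLinearGroup (Fin 2) K) := by
  have hCH := mul_self_eq_trace_smul_sub_det_smul (A : Matrix (Fin 2) (Fin 2) K)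
  rw [← coe_mul, h, A.det_coe, coe_one, one_smul, eq_sub_iff_add_eq, one_add_one_eq_two] at hCH
  have htr : (A : Matrix (Fin 2) (Fin 2) K).trace ≠ 0 := by
    intro h0
    rw [h0, zero_smul] at hCH
    have h00 := congrFun (congrFun hCH 0) 0
    rw [ofNat_apply] at h00
    exact two_ne_zero h00
  refine Subgroup.mem_center_iff.mpr fun B => Subtype.ext ?_
  have hBA : Commute (B : Matrix (Fin 2) (Fin 2) K) ((A : Matrix (Fin 2) (Fin 2) K).trace • A) :=
    hCH ▸ Commute.ofNat_right _ 2
  simpa [smul_smul, inv_mul_cancel₀ htr] using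
    (hBA.smul_right (A : Matrix (Fin 2) (Fin 2) K).trace⁻¹).eq

theorem notMem_center_of_mul_self_eq_neg_one {A : SpecialLinearGroup (Fin 2) K}
    (h : A * A = -1) : A ∉ center (SpecialLinearGroup (Fin 2) K) := by
  have hne : (1 : SpecialLinearGroup (Fin 2) K) ≠ -1 := by
    intro h1
    have h00 := congrFun (congrFun (congrArg Subtype.val h1) 0) 0
    simp only [coe_one, coe_neg, one_apply_eq, neg_apply] at h00
    exact two_ne_zero (by linear_combination h00 : (2 : K) = 0)
  rw [mem_center_iff_eq_one_or_eq_neg_one]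
  rintro (rfl | rfl)
  · exact hne (by rwa [mul_one] at h)
  · exact hne (by rwa [neg_mul_neg, mul_one] at h)

end SpecialLinearGroup

end Matrix

theorem trSq_projPSL (A : SL2C) :
    trSq (projPSL A) = (A : Matrix (Fin 2) (Fin 2) ℂ).trace ^ 2 := by
  obtain ⟨⟨z, hz⟩, hout⟩ := QuotientGroup.mk_out_eq_mul (Subgroup.center SL2C) A
  rw [trSq, projPSL, QuotientGroup.mk'_apply, hout]
  rcases Matrix.SpecialLinearGroup.mem_center_iff_eq_one_or_eq_neg_one.mp hz with rfl | rfl <;>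
    simp

theorem projPSL_eq_one_iff {A : SL2C} : projPSL A = 1 ↔ A ∈ Subgroup.center SL2C :=
  QuotientGroup.eq_one_iff A

theorem IsLoxodromic.trace_ne_zero {G : SL2C} (hG : IsLoxodromic (projPSL G)) :
    (G : Matrix (Fin 2) (Fin 2) ℂ).trace ≠ 0 := fun h0 =>
  hG ⟨0, le_rfl, by norm_num, by rw [trSq_projPSL, h0, Complex.ofReal_zero, sq, mul_zero]⟩

theorem IsLoxodromic.ne_smul_one {G : SL2C} (hG : IsLoxodromic (projPSL G)) (c : ℂ) :
    (G : Matrix (Fin 2) (Fin 2) ℂ) ≠ c • 1 := fun hc =>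
  hG ⟨4, by norm_num, le_rfl, by
    rw [trSq_projPSL, Matrix.SpecialLinearGroup.trace_sq_eq_four_of_eq_smul_one hc,
      Complex.ofReal_ofNat]⟩

theorem pslAct_eq_smul (g : PSL2C) (x : P1) : pslAct g x = g • x := by
  conv_rhs => rw [← QuotientGroup.out_eq' g]
  induction x using Projectivization.ind with
  | h u hu => rfl

theorem Matrix.ProjectiveSpecialLinearGroup.smul_mk_eq_self_iff {ι K : Type*} [Fintype ι]
    [DecidableEq ι] [Field K] (A : SpecialLinearGroup ι K) {u : ι → K} (hu : u ≠ 0) :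
    (A : ProjectiveSpecialLinearGroup ι K) • Projectivization.mk K u hu =
        Projectivization.mk K u hu ↔ ∃ c : K, c • u = (A : Matrix ι ι K) *ᵥ u := by
  rw [smul_proj_mk, Projectivization.smul_mk, Projectivization.mk_eq_mk_iff']
  rfl

theorem pslAct_eq_self_of_commute {G R : SL2C}
    (hG : ∀ c : ℂ, (G : Matrix (Fin 2) (Fin 2) ℂ) ≠ c • 1) (hRG : Commute R G) {x : P1}
    (hx : pslAct (projPSL G) x = x) :
    pslAct (projPSL R) x = x := by
  induction x using Projectivization.ind with
  | h u hu =>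
    rw [pslAct_eq_smul] at hx ⊢
    obtain ⟨c, hGu⟩ := (Matrix.ProjectiveSpecialLinearGroup.smul_mk_eq_self_iff G hu).mp hx
    exact (Matrix.ProjectiveSpecialLinearGroup.smul_mk_eq_self_iff R hu).mpr
      (Matrix.exists_smul_eq_mulVec_of_commute hG (congrArg Subtype.val hRG.eq) hu hGu.symm)

theorem statement19_general (f g : PSL2C) (hg : IsLoxodromic g)
    (h : f * f = g * g) :
    f = g ∨ ∃ r : PSL2C, r ≠ 1 ∧ r * r = 1 ∧ f = g * r ∧
      ∀ x : P1, pslAct g x = x → pslAct r x = x := by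
  obtain ⟨F, rfl⟩ : ∃ F, projPSL F = f := QuotientGroup.mk'_surjective _ f
  obtain ⟨G, rfl⟩ : ∃ G, projPSL G = g := QuotientGroup.mk'_surjective _ g
  rw [← map_mul, ← map_mul] at h
  obtain ⟨z, hz, hGGz⟩ := (QuotientGroup.mk'_eq_mk' _).mp h.symm
  have hFG : Commute F G :=
    Matrix.SpecialLinearGroup.commute_of_mul_self_mul_eq_mul_self hg.trace_ne_zero hz hGGz
  have hRR : G⁻¹ * F * (G⁻¹ * F) = z := by
    rw [mul_assoc, ← mul_assoc F, hFG.inv_right.eq, mul_assoc G⁻¹ F F, ← hGGz]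
    group
  have hFGR : projPSL F = projPSL G * projPSL (G⁻¹ * F) := by
    rw [← map_mul, mul_inv_cancel_left]
  rcases Matrix.SpecialLinearGroup.mem_center_iff_eq_one_or_eq_neg_one.mp hz with rfl | rfl
  · left
    rw [hFGR, projPSL_eq_one_iff.mpr
      (Matrix.SpecialLinearGroup.mem_center_of_mul_self_eq_one hRR), mul_one]
  · right
    refine ⟨projPSL (G⁻¹ * F), ?_, ?_, hFGR, fun x => pslAct_eq_self_of_commute
      hg.ne_smul_one ((Commute.inv_left (Commute.refl G)).mul_left hFG)⟩
    · exact fun h1 => Matrix.SpecialLinearGroup.notMem_center_of_mul_self_eq_neg_one hRR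
        (projPSL_eq_one_iff.mp h1)
    · rw [← map_mul, hRR, projPSL_eq_one_iff]
      exact hz

/-- two loxodromic elements with equal squares are equal or differ by an elliptic
involution fixing both fixed points. -/
theorem statement19 (f g : PSL2C) (hf : IsLoxodromic f) (hg : IsLoxodromic g)
    (h : f * f = g * g) :
    f = g ∨ ∃ r : PSL2C, r ≠ 1 ∧ r * r = 1 ∧ f = g * r ∧
      ∀ x : P1, pslAct g x = x → pslAct r x = x :=
  statement19_general f g hg h
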